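/- arXiv:1912.04089 — 2 statements merged into one kernel-verified Lean document; each statement's English description precedes it below -/
import Mathlib

section
/- Let P, M be symmetric real q×q matrices, C = M Pᵀ and Q = P M Pᵀ, and let Q⁺ denote the Moore–Penrose pseudoinverse of Q. If M maps the image (column space) of P into the image of P, then C − C Q⁺ Q = 0. -/
open Matrix

/-- The four Penrose conditions characterizing the Moore–Penrose pseudoinverse. -/
def IsMoorePenroseInv {q : ℕ} (Q Qp : Matrix (Fin q) (Fin q) ℝ) : Prop :=
  Q * Qp * Q = Q ∧ Qp * Q * Qp = Qp ∧ (Q * Qp)ᵀ = Q * Qp ∧ (Qp * Q)ᵀ = Qp * Q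

theorem stmt0 {q : ℕ} (P M : Matrix (Fin q) (Fin q) ℝ)
    (hP : Pᵀ = P) (hM : Mᵀ = M)
    (C : Matrix (Fin q) (Fin q) ℝ) (hC : C = M * Pᵀ)
    (Q : Matrix (Fin q) (Fin q) ℝ) (hQ : Q = P * M * Pᵀ)
    (Qp : Matrix (Fin q) (Fin q) ℝ) (hQp : IsMoorePenroseInv Q Qp)
    (hIm : ∀ v ∈ Set.range P.mulVec, M.mulVec v ∈ Set.range P.mulVec) :
    C - C * Qp * Q = 0 := by
  -- Choose A with M * P = P * A
  have hch : ∀ j : Fin q, ∃ w, P *ᵥ w = M *ᵥ (P *ᵥ Pi.single j 1) := by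
    intro j
    obtain ⟨w, hw⟩ := hIm (P *ᵥ Pi.single j 1) ⟨Pi.single j 1, rfl⟩
    exact ⟨w, hw⟩
  choose a ha using hch
  set A : Matrix (Fin q) (Fin q) ℝ := Matrix.of (fun i j => a j i) with hA
  have hMP : M * P = P * A := by
    ext i j
    have h := congrFun (ha j) i
    simp only [mulVec, dotProduct, Pi.single_apply, mul_ite, mul_one, mul_zero,
      Finset.sum_ite_eq', Finset.mem_univ, if_true] at h
    simp only [mul_apply, hA, Matrix.of_apply]
    rw [← h]
  set K : Matrix (Fin q) (Fin q) ℝ := 1 - Qp * Q with hK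
  have hQK : Q * K = 0 := by
    rw [hK, mul_sub, mul_one, ← mul_assoc, hQp.1, sub_self]
  -- P * (P * (A * K)) = Q * K = 0
  have hPPAK : P * (P * (A * K)) = 0 := by
    have : P * (P * (A * K)) = Q * K := by
      rw [hQ, hP]
      rw [show P * M * P * K = P * ((M * P) * K) by noncomm_ring, hMP]
      noncomm_ring
    rw [this, hQK]
  have hPAK : P * (A * K) = 0 := by
    ext i j
    set y : Fin q → ℝ := fun k => (A * K) k j with hy
    have hcol : ∀ (B : Matrix (Fin q) (Fin q) ℝ) (i : Fin q),
        (B * (A * K)) i j = (B *ᵥ y) i := by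
      intro B i
      simp [mul_apply, mulVec, dotProduct, hy]
    have h2 : P *ᵥ (P *ᵥ y) = 0 := by
      funext i'
      have := congrFun (congrFun hPPAK i') j
      simp only [Matrix.zero_apply] at this
      rw [show P * (P * (A * K)) = (P * P) * (A * K) by noncomm_ring] at this
      rw [hcol (P * P) i'] at this
      simpa [mulVec_mulVec] using this
    have h3 : (P *ᵥ y) ⬝ᵥ (P *ᵥ y) = 0 := by
      calc (P *ᵥ y) ⬝ᵥ (P *ᵥ y) = ((P *ᵥ y) ᵥ* P) ⬝ᵥ y := by
            rw [dotProduct_mulVec]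
        _ = (P *ᵥ (P *ᵥ y)) ⬝ᵥ y := by rw [← hP, vecMul_transpose, hP]
        _ = 0 := by rw [h2, zero_dotProduct]
    have h4 : P *ᵥ y = 0 := by
      have := dotProduct_self_eq_zero.mp h3
      exact this
    rw [hcol P i, h4]
    simp
  have hCK : C * K = 0 := by
    have : C * K = P * (A * K) := by
      rw [hC, hP, hMP]
      noncomm_ring
    rw [this, hPAK]
  have : C * K = C - C * Qp * Q := by rw [hK]; noncomm_ring
  rw [← this, hCK]
end

section
/- Let L be the (lower-triangular) Cholesky factor of a symmetric positive definite matrix V ∈ ℝ^{m×m} (V = L Lᵀ), let e ∈ ℝ^m be a random vector with E(e) = 0 and Var(e) = V, and let Π = diag(s₁,…,s_m) with i.i.d. Rademacher signs independent of e. Then the vector e* = L Π L⁻¹ e satisfies E(e*) = 0 and Var(e*) = V. -/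
open MeasureTheory ProbabilityTheory Matrix

/-!
Write `e = L f` with `f = L⁻¹ e`. Since `L⁻¹ V L⁻¹ᵀ = 1`, the whitened vector `f` has identity
covariance, and `e* = L (Π f)`. Flipping coordinates by independent centred signs kills the mean
and all off-diagonal second moments while keeping the diagonal (`E(Π A Π) = diag A`), so `Π f`
again has mean `0` and covariance `1`, and `e*` has covariance `L 1 Lᵀ = V`.
-/

theorem Matrix.inv_mul_mul_transpose_mul_transpose_inv {n R : Type*} [Fintype n] [DecidableEq n]
    [CommRing R] (L : Matrix n n R) (hL : IsUnit L.det) : L⁻¹ * (L * Lᵀ) * L⁻¹ᵀ = 1 := by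
  rw [transpose_nonsing_inv, ← Matrix.mul_assoc, nonsing_inv_mul L hL, Matrix.one_mul,
    mul_nonsing_inv Lᵀ (by rwa [det_transpose])]

namespace MeasureTheory

variable {Ω : Type*} [MeasurableSpace Ω] {μ : Measure Ω}

section Rademacher

variable [IsProbabilityMeasure μ] {s : Ω → ℝ}

theorem ae_eq_one_or_eq_neg_one_of_measure_eq_half (hs : Measurable s)
    (hplus : μ {ω | s ω = 1} = 1 / 2) (hminus : μ {ω | s ω = -1} = 1 / 2) :
    ∀ᵐ ω ∂μ, s ω = 1 ∨ s ω = -1 := by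
  have hplus_meas : MeasurableSet {ω | s ω = 1} := measurableSet_eq_fun hs measurable_const
  have hminus_meas : MeasurableSet {ω | s ω = -1} := measurableSet_eq_fun hs measurable_const
  have hdisj : Disjoint {ω | s ω = 1} {ω | s ω = -1} :=
    Set.disjoint_left.2 fun ω (h1 : s ω = 1) (h2 : s ω = -1) => by linarith
  refine (ae_mem_iff_measure_eq (hplus_meas.union hminus_meas).nullMeasurableSet).2 ?_
  rw [measure_union hdisj hminus_meas, hplus, hminus, ENNReal.add_halves, measure_univ]

theorem integral_eq_zero_of_measure_eq_half (hs : Measurable s)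
    (hplus : μ {ω | s ω = 1} = 1 / 2) (hminus : μ {ω | s ω = -1} = 1 / 2) :
    ∫ ω, s ω ∂μ = 0 := by
  have hplus_meas : MeasurableSet {ω | s ω = 1} := measurableSet_eq_fun hs measurable_const
  have hminus_meas : MeasurableSet {ω | s ω = -1} := measurableSet_eq_fun hs measurable_const
  have hs_eq : s =ᵐ[μ] fun ω => {ω | s ω = 1}.indicator 1 ω - {ω | s ω = -1}.indicator 1 ω := by
    filter_upwards [ae_eq_one_or_eq_neg_one_of_measure_eq_half hs hplus hminus] with ω hω
    rcases hω with h | h <;> norm_num [Set.indicator_apply, h]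
  rw [integral_congr_ae hs_eq, integral_sub ((integrable_const 1).indicator hplus_meas)
    ((integrable_const 1).indicator hminus_meas), integral_indicator_one hplus_meas,
    integral_indicator_one hminus_meas, measureReal_def, measureReal_def, hplus, hminus, sub_self]

end Rademacher

section RandomVector

variable {ι κ : Type*} [Fintype κ]

theorem Integrable.of_integrable_mul_self [IsFiniteMeasure μ] {f : Ω → ℝ}
    (hf : AEStronglyMeasurable f μ) (hf2 : Integrable (fun ω => f ω * f ω) μ) :
    Integrable f μ :=
  ((memLp_two_iff_integrable_sq hf).2 (by simpa only [sq] using hf2)).integrable one_le_two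

theorem integral_mulVec_apply {x : Ω → κ → ℝ} (hx : ∀ a, Integrable (fun ω => x ω a) μ)
    (A : Matrix ι κ ℝ) (i : ι) :
    ∫ ω, (A *ᵥ x ω) i ∂μ = (A *ᵥ fun a => ∫ ω, x ω a ∂μ) i := by
  simp only [mulVec, dotProduct]
  rw [integral_finsetSum _ fun a _ => (hx a).const_mul _]
  simp only [integral_const_mul]

theorem mulVec_mul_mulVec_eq_sum (A : Matrix ι κ ℝ) (v : κ → ℝ) (i j : ι) :
    (A *ᵥ v) i * (A *ᵥ v) j = ∑ a, ∑ b, (A i a * A j b) * (v a * v b) := by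
  simp only [mulVec, dotProduct, Finset.sum_mul_sum]
  exact Finset.sum_congr rfl fun a _ => Finset.sum_congr rfl fun b _ => by ring

theorem integrable_mulVec_mul_mulVec {x : Ω → κ → ℝ}
    (hx : ∀ a b, Integrable (fun ω => x ω a * x ω b) μ) (A : Matrix ι κ ℝ) (i j : ι) :
    Integrable (fun ω => (A *ᵥ x ω) i * (A *ᵥ x ω) j) μ := by
  simp only [mulVec_mul_mulVec_eq_sum]
  exact integrable_finsetSum _ fun a _ =>
    integrable_finsetSum _ fun b _ => (hx a b).const_mul _

theorem integral_mulVec_mul_mulVec {x : Ω → κ → ℝ} {C : Matrix κ κ ℝ}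
    (hx : ∀ a b, Integrable (fun ω => x ω a * x ω b) μ)
    (hC : ∀ a b, ∫ ω, x ω a * x ω b ∂μ = C a b) (A : Matrix ι κ ℝ) (i j : ι) :
    ∫ ω, (A *ᵥ x ω) i * (A *ᵥ x ω) j ∂μ = (A * C * Aᵀ) i j := by
  simp only [mulVec_mul_mulVec_eq_sum]
  rw [integral_finsetSum _ fun a _ =>
    integrable_finsetSum _ fun b _ => (hx a b).const_mul _]
  have hinner : ∀ a, ∫ ω, ∑ b, (A i a * A j b) * (x ω a * x ω b) ∂μ
      = ∑ b, (A i a * A j b) * C a b := fun a => by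
    rw [integral_finsetSum _ fun b _ => (hx a b).const_mul _]
    simp only [integral_const_mul, hC]
  simp only [hinner, mul_apply, transpose_apply, Finset.sum_mul]
  rw [Finset.sum_comm]
  exact Finset.sum_congr rfl fun a _ => Finset.sum_congr rfl fun b _ => by ring

end RandomVector

section SignFlip

variable {ι : Type*} {s : ι → Ω → ℝ} {x : Ω → ι → ℝ}

theorem ae_norm_mul_le_one_of_sign (hs_sign : ∀ k, ∀ᵐ ω ∂μ, s k ω = 1 ∨ s k ω = -1) (k l : ι) :
    ∀ᵐ ω ∂μ, ‖s k ω * s l ω‖ ≤ 1 := by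
  filter_upwards [hs_sign k, hs_sign l] with ω hk hl
  rcases hk with hk | hk <;> rcases hl with hl | hl <;> simp [hk, hl]

theorem integrable_sign_mul [IsFiniteMeasure μ] (hs : ∀ k, Measurable (s k))
    (hs_sign : ∀ k, ∀ᵐ ω ∂μ, s k ω = 1 ∨ s k ω = -1)
    (hx : ∀ k, Integrable (fun ω => x ω k) μ) (k : ι) :
    Integrable (fun ω => s k ω * x ω k) μ :=
  (hx k).bdd_mul (c := 1) (hs k).aestronglyMeasurable <| by
    filter_upwards [hs_sign k] with ω hk
    rcases hk with hk | hk <;> simp [hk]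

theorem integrable_sign_mul_mul_sign_mul (hs : ∀ k, Measurable (s k))
    (hs_sign : ∀ k, ∀ᵐ ω ∂μ, s k ω = 1 ∨ s k ω = -1)
    (hx : ∀ k l, Integrable (fun ω => x ω k * x ω l) μ) (k l : ι) :
    Integrable (fun ω => (s k ω * x ω k) * (s l ω * x ω l)) μ := by
  have h := (hx k l).bdd_mul ((hs k).mul (hs l)).aestronglyMeasurable
    (ae_norm_mul_le_one_of_sign hs_sign k l)
  exact h.congr (.of_forall fun ω => by simp only [Pi.mul_apply]; ring)

theorem integral_sign_mul_eq_zero (hs : ∀ k, Measurable (s k)) (hs_mean : ∀ k, ∫ ω, s k ω ∂μ = 0)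
    (hx : Measurable x) (hsx : IndepFun (fun ω k => s k ω) x μ) (k : ι) :
    ∫ ω, s k ω * x ω k ∂μ = 0 := by
  have hind : IndepFun (s k) (fun ω => x ω k) μ :=
    hsx.comp (measurable_pi_apply k) (measurable_pi_apply k)
  rw [hind.integral_fun_mul_eq_mul_integral (hs k).aestronglyMeasurable
    hx.eval.aestronglyMeasurable, hs_mean, zero_mul]

theorem integral_sign_mul_mul_sign_mul [DecidableEq ι] (hs : ∀ k, Measurable (s k))
    (hs_sign : ∀ k, ∀ᵐ ω ∂μ, s k ω = 1 ∨ s k ω = -1) (hs_mean : ∀ k, ∫ ω, s k ω ∂μ = 0)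
    (hs_indep : iIndepFun s μ) (hx : Measurable x) (hsx : IndepFun (fun ω k => s k ω) x μ)
    (k l : ι) :
    ∫ ω, (s k ω * x ω k) * (s l ω * x ω l) ∂μ = if k = l then ∫ ω, x ω k * x ω k ∂μ else 0 := by
  split_ifs with hkl
  · subst hkl
    refine integral_congr_ae ?_
    filter_upwards [hs_sign k] with ω hk
    rcases hk with hk | hk <;> rw [hk] <;> ring
  · have hind : IndepFun (fun ω => s k ω * s l ω) (fun ω => x ω k * x ω l) μ :=
      hsx.comp ((measurable_pi_apply k).mul (measurable_pi_apply l))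
        ((measurable_pi_apply k).mul (measurable_pi_apply l))
    have hss_mean : ∫ ω, s k ω * s l ω ∂μ = 0 := by
      rw [(hs_indep.indepFun hkl).integral_fun_mul_eq_mul_integral (hs k).aestronglyMeasurable
        (hs l).aestronglyMeasurable, hs_mean, zero_mul]
    calc ∫ ω, (s k ω * x ω k) * (s l ω * x ω l) ∂μ
        = ∫ ω, (s k ω * s l ω) * (x ω k * x ω l) ∂μ := by congr 1; ext ω; ring
      _ = 0 := by
        rw [hind.integral_fun_mul_eq_mul_integral ((hs k).mul (hs l)).aestronglyMeasurable
          (hx.eval.mul hx.eval).aestronglyMeasurable, hss_mean, zero_mul]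

end SignFlip

end MeasureTheory

theorem stmt17_general {m : ℕ} {Ω : Type*} [MeasureSpace Ω] (μ : Measure Ω) [IsProbabilityMeasure μ]
    (V L : Matrix (Fin m) (Fin m) ℝ) (hLV : V = L * Lᵀ)
    (hLunit : IsUnit L.det)
    (e : Ω → Fin m → ℝ) (hemeas : Measurable e)
    (heint : ∀ i j, Integrable (fun ω => e ω i * e ω j) μ)
    (hecov : ∀ i j, ∫ ω, e ω i * e ω j ∂μ = V i j)
    (s : Fin m → Ω → ℝ) (hsmeas : ∀ i, Measurable (s i))
    (hsindep : iIndepFun s μ)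
    (hplus : ∀ i, μ {ω | s i ω = 1} = 1 / 2)
    (hminus : ∀ i, μ {ω | s i ω = -1} = 1 / 2)
    (hse : IndepFun (fun ω i => s i ω) e μ)
    (estar : Ω → Fin m → ℝ)
    (hestar : ∀ ω, estar ω = L.mulVec (fun i => s i ω * (L⁻¹.mulVec (e ω)) i)) :
    (∀ i, ∫ ω, estar ω i ∂μ = 0) ∧
    (∀ i j, ∫ ω, estar ω i * estar ω j ∂μ = V i j) := by
  subst hLV
  have hs_sign i := ae_eq_one_or_eq_neg_one_of_measure_eq_half (hsmeas i) (hplus i) (hminus i)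
  have hs_mean i := integral_eq_zero_of_measure_eq_half (hsmeas i) (hplus i) (hminus i)
  set f : Ω → Fin m → ℝ := fun ω => L⁻¹ *ᵥ e ω
  have hmulVec : Measurable fun v : Fin m → ℝ => L⁻¹ *ᵥ v :=
    (continuous_const.matrix_mulVec continuous_id).measurable
  have hf_meas : Measurable f := hmulVec.comp hemeas
  have hsf : IndepFun (fun ω i => s i ω) f μ := hse.comp measurable_id hmulVec
  have hf_int2 := integrable_mulVec_mul_mulVec heint L⁻¹
  have hf_int i : Integrable (fun ω => f ω i) μ :=
    .of_integrable_mul_self hf_meas.eval.aestronglyMeasurable (hf_int2 i i)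
  have hf_cov i j : ∫ ω, f ω i * f ω j ∂μ = (1 : Matrix (Fin m) (Fin m) ℝ) i j := by
    rw [integral_mulVec_mul_mulVec heint hecov, inv_mul_mul_transpose_mul_transpose_inv L hLunit]
  have hg_cov i j :
      ∫ ω, (s i ω * f ω i) * (s j ω * f ω j) ∂μ = (1 : Matrix (Fin m) (Fin m) ℝ) i j := by
    rw [integral_sign_mul_mul_sign_mul hsmeas hs_sign hs_mean hsindep hf_meas hsf, hf_cov]
    rcases eq_or_ne i j with rfl | h <;> simp [*]
  obtain rfl : estar = fun ω => L *ᵥ fun i => s i ω * f ω i := funext hestar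
  refine ⟨fun i => ?_, fun i j => ?_⟩
  · rw [integral_mulVec_apply (integrable_sign_mul hsmeas hs_sign hf_int) L i]
    simp [integral_sign_mul_eq_zero hsmeas hs_mean hf_meas hsf, mulVec, dotProduct]
  · rw [integral_mulVec_mul_mulVec (integrable_sign_mul_mul_sign_mul hsmeas hs_sign hf_int2)
      hg_cov, Matrix.mul_one]

/-- If `V = L Lᵀ` is the Cholesky decomposition of a symmetric positive definite `V`,
`e` is a random vector with mean `0` and covariance `V`, and `Π = diag(s₁,…,s_m)` with
i.i.d. Rademacher signs independent of `e`, then `e* = L Π L⁻¹ e` has mean `0` and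
covariance `V`. -/
theorem stmt17 {m : ℕ} {Ω : Type*} [MeasureSpace Ω] (μ : Measure Ω) [IsProbabilityMeasure μ]
    (V L : Matrix (Fin m) (Fin m) ℝ) (hVpd : V.PosDef)
    (hLtri : ∀ i j : Fin m, i < j → L i j = 0) (hLV : V = L * Lᵀ)
    (hLunit : IsUnit L.det)
    (e : Ω → Fin m → ℝ) (hemeas : Measurable e)
    (heint : ∀ i j, Integrable (fun ω => e ω i * e ω j) μ)
    (hemean : ∀ i, ∫ ω, e ω i ∂μ = 0)
    (hecov : ∀ i j, ∫ ω, e ω i * e ω j ∂μ = V i j)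
    (s : Fin m → Ω → ℝ) (hsmeas : ∀ i, Measurable (s i))
    (hsindep : iIndepFun s μ)
    (hplus : ∀ i, μ {ω | s i ω = 1} = 1 / 2)
    (hminus : ∀ i, μ {ω | s i ω = -1} = 1 / 2)
    (hse : IndepFun (fun ω i => s i ω) e μ)
    (estar : Ω → Fin m → ℝ)
    (hestar : ∀ ω, estar ω = L.mulVec (fun i => s i ω * (L⁻¹.mulVec (e ω)) i)) :
    (∀ i, ∫ ω, estar ω i ∂μ = 0) ∧
    (∀ i j, ∫ ω, estar ω i * estar ω j ∂μ = V i j) :=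
  stmt17_general μ V L hLV hLunit e hemeas heint hecov s hsmeas hsindep hplus hminus hse estar
    hestar
end
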